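/- arXiv:1901.10989 — 3 statements merged into one kernel-verified Lean document; each statement's English description precedes it below -/
import Mathlib

section
/- Let γ¹, γ², λ > 0, β > 0, a > 0, s ∈ ℝ, T > 0, and set δ = sqrt((γ¹ + γ²) a² / (2λ)). Define F₀(t) = −δ tanh(δ(T − t)), E₀(t) = (β/a) F₀(t), and D₀(t) = −(γ² s/(γ¹ + γ²)) F₀(t) on [0, T]. Then F₀′(t) = ((γ¹ + γ²)/(2λ)) a² − F₀(t)² with F₀(T) = 0, E₀′(t) = ((γ¹ + γ²)/(2λ)) β a − E₀(t) F₀(t) with E₀(T) = 0, and D₀′(t) = −(γ² s/(2λ)) a² − F₀(t) D₀(t) with D₀(T) = 0. In particular, when γ¹ = γ², the functions (B, C, E, F) = (0, 0, E₀, F₀) solve the coupled Riccati system. -/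
open Set

/-!
`tanh' = 1 - tanh²` makes `F₀(t) = -δ tanh(δ(T - t))` the solution of `F' = δ² - F²` vanishing
at `T`, and `δ² = (γ¹ + γ²) a² / (2λ)` is exactly the forcing term of the `F`-equation. If `F`
solves `F' = q - F²`, every multiple `cF` solves `(cF)' = cq - (cF) F`; `E₀` and `D₀` are such
multiples, with `c` chosen so that `cδ²` is the required constant. For `γ¹ = γ²` the `B`- and
`C`-equations lose their forcing, so `B = C = 0` solves them and decouples `E` and `F`.
-/

/-- The coupled Riccati system: `(B, C, E, F)` is a continuously differentiable solution on
`[0, T]` of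
`B′(t) = ((γ¹ − γ²)/2) β (a + B(t)) − C(t)E(t)`,
`C′(t) = ((γ¹ − γ²)/2)(a + B(t))² − C(t)F(t)`,
`E′(t) = ((γ¹ + γ²)/(2λ)) β (a + B(t)) − E(t)F(t)`,
`F′(t) = ((γ¹ + γ²)/(2λ))(a + B(t))² − F(t)²`,
with terminal conditions `B(T) = C(T) = E(T) = F(T) = 0`. -/
def RiccatiSystem (γ1 γ2 lam β a T : ℝ) (B C E F : ℝ → ℝ) : Prop :=
  ContDiffOn ℝ 1 B (Icc 0 T) ∧ ContDiffOn ℝ 1 C (Icc 0 T) ∧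
  ContDiffOn ℝ 1 E (Icc 0 T) ∧ ContDiffOn ℝ 1 F (Icc 0 T) ∧
  (∀ t ∈ Icc (0:ℝ) T,
      HasDerivWithinAt B ((γ1 - γ2) / 2 * β * (a + B t) - C t * E t) (Icc 0 T) t ∧
      HasDerivWithinAt C ((γ1 - γ2) / 2 * (a + B t) ^ 2 - C t * F t) (Icc 0 T) t ∧
      HasDerivWithinAt E ((γ1 + γ2) / (2 * lam) * β * (a + B t) - E t * F t) (Icc 0 T) t ∧
      HasDerivWithinAt F ((γ1 + γ2) / (2 * lam) * (a + B t) ^ 2 - F t ^ 2) (Icc 0 T) t) ∧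
  B T = 0 ∧ C T = 0 ∧ E T = 0 ∧ F T = 0

theorem Real.hasDerivAt_tanh (x : ℝ) : HasDerivAt Real.tanh (1 - Real.tanh x ^ 2) x := by
  have hcosh : Real.cosh x ≠ 0 := (Real.cosh_pos x).ne'
  have h := (Real.hasDerivAt_sinh x).div (Real.hasDerivAt_cosh x) hcosh
  rw [show Real.sinh / Real.cosh = Real.tanh from
    funext fun y => (Real.tanh_eq_sinh_div_cosh y).symm] at h
  refine h.congr_deriv ?_
  rw [Real.tanh_eq_sinh_div_cosh]
  field_simp

theorem Real.contDiff_tanh {n : WithTop ℕ∞} : ContDiff ℝ n Real.tanh := by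
  rw [show Real.tanh = fun x => Real.sinh x / Real.cosh x from funext Real.tanh_eq_sinh_div_cosh]
  exact Real.contDiff_sinh.div Real.contDiff_cosh fun x => (Real.cosh_pos x).ne'

theorem hasDerivAt_neg_mul_tanh_mul_sub (δ T t : ℝ) :
    HasDerivAt (fun t => -δ * Real.tanh (δ * (T - t)))
      (δ ^ 2 - (-δ * Real.tanh (δ * (T - t))) ^ 2) t := by
  have hinner : HasDerivAt (fun t => δ * (T - t)) (-δ) t := by
    simpa using ((hasDerivAt_id t).const_sub T).const_mul δ
  refine (((Real.hasDerivAt_tanh _).comp t hinner).const_mul (-δ)).congr_deriv ?_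
  ring

theorem HasDerivAt.const_mul_of_riccati {F : ℝ → ℝ} {q t : ℝ}
    (hF : HasDerivAt F (q - F t ^ 2) t) (c : ℝ) :
    HasDerivAt (fun t => c * F t) (c * q - c * F t * F t) t := by
  refine (hF.const_mul c).congr_deriv ?_
  ring

theorem riccatiSystem_zero_zero {γ lam β a T : ℝ} {E F : ℝ → ℝ}
    (hE : ContDiffOn ℝ 1 E (Icc 0 T)) (hF : ContDiffOn ℝ 1 F (Icc 0 T))
    (hE' : ∀ t ∈ Icc (0:ℝ) T,
      HasDerivWithinAt E ((γ + γ) / (2 * lam) * β * a - E t * F t) (Icc 0 T) t)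
    (hF' : ∀ t ∈ Icc (0:ℝ) T,
      HasDerivWithinAt F ((γ + γ) / (2 * lam) * a ^ 2 - F t ^ 2) (Icc 0 T) t)
    (hET : E T = 0) (hFT : F T = 0) :
    RiccatiSystem γ γ lam β a T (fun _ => 0) (fun _ => 0) E F := by
  refine ⟨contDiffOn_const, contDiffOn_const, hE, hF, fun t ht => ?_, rfl, rfl, hET, hFT⟩
  simp only [sub_self, zero_div, zero_mul, add_zero]
  exact ⟨hasDerivWithinAt_const _ _ _, hasDerivWithinAt_const _ _ _, hE' t ht, hF' t ht⟩

theorem limiting_riccati_solutions_general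
    (γ1 γ2 lam β a s T : ℝ)
    (hγ1 : 0 < γ1) (hγ2 : 0 < γ2) (hlam : 0 < lam) (ha : 0 < a)
    (δ : ℝ) (hδ : δ = Real.sqrt ((γ1 + γ2) * a ^ 2 / (2 * lam)))
    (F0 E0 D0 : ℝ → ℝ)
    (hF0 : F0 = fun t => -δ * Real.tanh (δ * (T - t)))
    (hE0 : E0 = fun t => β / a * F0 t)
    (hD0 : D0 = fun t => -(γ2 * s / (γ1 + γ2)) * F0 t) :
    (∀ t ∈ Icc (0:ℝ) T,
      HasDerivWithinAt F0 ((γ1 + γ2) / (2 * lam) * a ^ 2 - F0 t ^ 2) (Icc 0 T) t ∧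
      HasDerivWithinAt E0 ((γ1 + γ2) / (2 * lam) * β * a - E0 t * F0 t) (Icc 0 T) t ∧
      HasDerivWithinAt D0 (-(γ2 * s / (2 * lam)) * a ^ 2 - F0 t * D0 t) (Icc 0 T) t) ∧
    F0 T = 0 ∧ E0 T = 0 ∧ D0 T = 0 ∧
    (γ1 = γ2 → RiccatiSystem γ1 γ2 lam β a T (fun _ => 0) (fun _ => 0) E0 F0) := by
  have hδsq : δ ^ 2 = (γ1 + γ2) / (2 * lam) * a ^ 2 := by
    rw [hδ, Real.sq_sqrt (by positivity)]
    ring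
  have hF0' (t : ℝ) : HasDerivAt F0 ((γ1 + γ2) / (2 * lam) * a ^ 2 - F0 t ^ 2) t := by
    subst hF0
    exact hδsq ▸ hasDerivAt_neg_mul_tanh_mul_sub δ T t
  have hE0' (t : ℝ) : HasDerivAt E0 ((γ1 + γ2) / (2 * lam) * β * a - E0 t * F0 t) t := by
    subst hE0
    refine ((hF0' t).const_mul_of_riccati (β / a)).congr_deriv ?_
    field_simp
  have hD0' (t : ℝ) : HasDerivAt D0 (-(γ2 * s / (2 * lam)) * a ^ 2 - F0 t * D0 t) t := by
    subst hD0
    refine ((hF0' t).const_mul_of_riccati _).congr_deriv ?_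
    field_simp
  have hF0T : F0 T = 0 := by simp [hF0]
  have hE0T : E0 T = 0 := by simp [hE0, hF0T]
  have hF0smooth : ContDiff ℝ 1 F0 :=
    hF0 ▸ contDiff_const.mul (Real.contDiff_tanh.comp (by fun_prop))
  have hE0smooth : ContDiff ℝ 1 E0 := hE0 ▸ contDiff_const.mul hF0smooth
  refine ⟨fun t _ => ⟨(hF0' t).hasDerivWithinAt, (hE0' t).hasDerivWithinAt,
    (hD0' t).hasDerivWithinAt⟩, hF0T, hE0T, by simp [hD0, hF0T], fun hγ => ?_⟩
  subst hγ
  exact riccatiSystem_zero_zero hE0smooth.contDiffOn hF0smooth.contDiffOn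
    (fun t _ => (hE0' t).hasDerivWithinAt) (fun t _ => (hF0' t).hasDerivWithinAt) hE0T hF0T

/-- The explicit limiting functions `F₀(t) = −δ tanh(δ(T − t))`, `E₀(t) = (β/a) F₀(t)`,
`D₀(t) = −(γ² s/(γ¹ + γ²)) F₀(t)` solve their respective ODEs, and for `γ¹ = γ²` the tuple
`(0, 0, E₀, F₀)` solves the coupled Riccati system. -/
theorem limiting_riccati_solutions
    (γ1 γ2 lam β a s T : ℝ)
    (hγ1 : 0 < γ1) (hγ2 : 0 < γ2) (hlam : 0 < lam) (hβ : 0 < β) (ha : 0 < a) (hT : 0 < T)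
    (δ : ℝ) (hδ : δ = Real.sqrt ((γ1 + γ2) * a ^ 2 / (2 * lam)))
    (F0 E0 D0 : ℝ → ℝ)
    (hF0 : F0 = fun t => -δ * Real.tanh (δ * (T - t)))
    (hE0 : E0 = fun t => β / a * F0 t)
    (hD0 : D0 = fun t => -(γ2 * s / (γ1 + γ2)) * F0 t) :
    (∀ t ∈ Icc (0:ℝ) T,
      HasDerivWithinAt F0 ((γ1 + γ2) / (2 * lam) * a ^ 2 - F0 t ^ 2) (Icc 0 T) t ∧
      HasDerivWithinAt E0 ((γ1 + γ2) / (2 * lam) * β * a - E0 t * F0 t) (Icc 0 T) t ∧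
      HasDerivWithinAt D0 (-(γ2 * s / (2 * lam)) * a ^ 2 - F0 t * D0 t) (Icc 0 T) t) ∧
    F0 T = 0 ∧ E0 T = 0 ∧ D0 T = 0 ∧
    (γ1 = γ2 → RiccatiSystem γ1 γ2 lam β a T (fun _ => 0) (fun _ => 0) E0 F0) :=
  limiting_riccati_solutions_general γ1 γ2 lam β a s T hγ1 hγ2 hlam ha δ hδ F0 E0 D0 hF0 hE0 hD0
end

section
/- Let (B, C, E, F) be a continuously differentiable solution on [0, T] of the coupled Riccati system, let γ̄ = γ¹γ²/(γ¹ + γ²), let A(t) = ∫ₜᵀ ( C(u)D(u) + γ̄ s a² − (γ² s/2)(a + B(u))² ) du and D(t) = ∫ₜᵀ exp(∫ₜᵘ F(r) dr) (γ² s/(2λ)) (a + B(u))² du, and define f(t, x, y) = A(t) + B(t) x + C(t) y and g(t, x, y) = D(t) + E(t) x + F(t) y on [0, T] × ℝ². Then for all (t, x, y) ∈ [0, T) × ℝ², fₜ + (1/2) f_{xx} + f_y g = −γ̄ s a² + (γ² s/2)(a + f_x)² + ((γ¹ − γ²)/2) β (a + f_x) x + ((γ¹ − γ²)/2)(a + f_x)²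 y, and gₜ + (1/2) g_{xx} + g_y g = ((γ¹ + γ²)/(2λ)) β (a + f_x) x − (γ² s/(2λ))(a + f_x)² + ((γ¹ + γ²)/(2λ))(a + f_x)² y, with terminal conditions f(T, x, y) = g(T, x, y) = 0. -/
/-!
Since `f` and `g` are affine in `(x, y)`, their second `x`-derivatives vanish and
`f_x = B`, `f_y = C`, `g_y = F`. Comparing the coefficients of `1`, `x`, `y`, both equations
reduce to the Riccati equations for `B, C, E, F` together with the linear equations
`A' = -(C D + γ̄ s a² - (γ² s / 2)(a + B)²)` and `D' = -F D - (γ² s / (2λ))(a + B)²`.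
The first is the fundamental theorem of calculus; the second holds because `D` is the
variation-of-constants solution of that linear equation with `D(T) = 0`.
-/

open Set

open Real

theorem ContinuousOn.hasDerivWithinAt_integral_Icc {a b t : ℝ} {φ : ℝ → ℝ}
    (hφ : ContinuousOn φ (Icc a b)) (ht : t ∈ Icc a b) :
    HasDerivWithinAt (fun u => ∫ x in u..b, φ x) (-φ t) (Icc a b) t := by
  have : Fact (t ∈ Icc a b) := ⟨ht⟩
  exact intervalIntegral.integral_hasDerivWithinAt_left
    ((hφ.mono (uIcc_subset_Icc ht (right_mem_Icc.2 (ht.1.trans ht.2)))).intervalIntegrable)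
    ⟨Icc a b, self_mem_nhdsWithin, hφ.aestronglyMeasurable measurableSet_Icc⟩ (hφ t ht)

theorem hasDerivWithinAt_integral_exp_integral_mul {a b t : ℝ} {F h : ℝ → ℝ}
    (hF : ContinuousOn F (Icc a b)) (hh : ContinuousOn h (Icc a b)) (ht : t ∈ Icc a b) :
    HasDerivWithinAt (fun τ => ∫ u in τ..b, exp (∫ r in τ..u, F r) * h u)
      (-F t * (∫ u in t..b, exp (∫ r in t..u, F r) * h u) - h t) (Icc a b) t := by
  set I : ℝ → ℝ := fun τ => ∫ r in τ..b, F r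
  have hI : ∀ τ ∈ Icc a b, HasDerivWithinAt I (-F τ) (Icc a b) τ :=
    fun τ hτ => hF.hasDerivWithinAt_integral_Icc hτ
  have hIc : ContinuousOn I (Icc a b) := fun τ hτ => (hI τ hτ).continuousWithinAt
  have hb : b ∈ Icc a b := right_mem_Icc.2 (ht.1.trans ht.2)
  -- `exp (∫ r in τ..u, F r) = exp (I τ) * exp (-I u)` separates `τ` from the integration variable
  have hrepr : ∀ τ ∈ Icc a b, ∫ u in τ..b, exp (∫ r in τ..u, F r) * h u
      = exp (I τ) * ∫ u in τ..b, exp (-I u) * h u := by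
    intro τ hτ
    rw [← intervalIntegral.integral_const_mul]
    refine intervalIntegral.integral_congr fun u hu => ?_
    have hu' : u ∈ Icc a b := uIcc_subset_Icc hτ hb hu
    have hsplit : ∫ r in τ..u, F r = I τ - I u :=
      eq_sub_of_add_eq (intervalIntegral.integral_add_adjacent_intervals
        (hF.mono (uIcc_subset_Icc hτ hu')).intervalIntegrable
        (hF.mono (uIcc_subset_Icc hu' hb)).intervalIntegrable)
    simp only [hsplit, sub_eq_add_neg, exp_add]
    ring
  have hJ := ((continuous_exp.comp_continuousOn hIc.neg).mul hh).hasDerivWithinAt_integral_Icc ht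
  have hprod : HasDerivWithinAt (fun τ => exp (I τ) * ∫ u in τ..b, exp (-I u) * h u)
      (exp (I t) * -F t * (∫ u in t..b, exp (-I u) * h u) + exp (I t) * -(exp (-I t) * h t))
      (Icc a b) t :=
    ((hasDerivAt_exp (I t)).comp_hasDerivWithinAt t (hI t ht)).mul hJ
  refine (hprod.congr_of_mem hrepr ht).congr_deriv ?_
  have hexp : exp (I t) * exp (-I t) = 1 := by rw [← exp_add, add_neg_cancel, exp_zero]
  rw [hrepr t ht]
  linear_combination (-h t) * hexp

theorem HasDerivWithinAt.derivWithin_affine {A B C : ℝ → ℝ} {A' B' C' x y t : ℝ} {s : Set ℝ}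
    (hA : HasDerivWithinAt A A' s t) (hB : HasDerivWithinAt B B' s t)
    (hC : HasDerivWithinAt C C' s t) (hs : UniqueDiffWithinAt ℝ s t) :
    _root_.derivWithin (fun τ => A τ + B τ * x + C τ * y) s t = A' + B' * x + C' * y :=
  ((hA.add (hB.mul_const x)).add (hC.mul_const y)).derivWithin hs

theorem affine_functions_solve_pde_general
    (γ1 γ2 lam β a s T : ℝ)
    (B C E F : ℝ → ℝ) (hsol : RiccatiSystem γ1 γ2 lam β a T B C E F)
    (γbar : ℝ)
    (D A : ℝ → ℝ)
    (hD : D = fun t => ∫ u in t..T, Real.exp (∫ r in t..u, F r) * (γ2 * s / (2 * lam)) *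
      (a + B u) ^ 2)
    (hA : A = fun t => ∫ u in t..T,
      (C u * D u + γbar * s * a ^ 2 - γ2 * s / 2 * (a + B u) ^ 2))
    (f g : ℝ → ℝ → ℝ → ℝ)
    (hf : f = fun t x y => A t + B t * x + C t * y)
    (hg : g = fun t x y => D t + E t * x + F t * y) :
    (∀ t ∈ Ico (0:ℝ) T, ∀ x y : ℝ,
      derivWithin (fun τ => f τ x y) (Icc 0 T) t
          + 1 / 2 * deriv (fun x' => deriv (fun x'' => f t x'' y) x') x
          + deriv (fun y' => f t x y') y * g t x y
        = -(γbar * s * a ^ 2) + γ2 * s / 2 * (a + deriv (fun x' => f t x' y) x) ^ 2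
            + (γ1 - γ2) / 2 * β * (a + deriv (fun x' => f t x' y) x) * x
            + (γ1 - γ2) / 2 * (a + deriv (fun x' => f t x' y) x) ^ 2 * y ∧
      derivWithin (fun τ => g τ x y) (Icc 0 T) t
          + 1 / 2 * deriv (fun x' => deriv (fun x'' => g t x'' y) x') x
          + deriv (fun y' => g t x y') y * g t x y
        = (γ1 + γ2) / (2 * lam) * β * (a + deriv (fun x' => f t x' y) x) * x
            - γ2 * s / (2 * lam) * (a + deriv (fun x' => f t x' y) x) ^ 2
            + (γ1 + γ2) / (2 * lam) * (a + deriv (fun x' => f t x' y) x) ^ 2 * y) ∧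
    (∀ x y : ℝ, f T x y = 0 ∧ g T x y = 0) := by
  obtain ⟨hB, hC, -, hF, hODE, hBT, hCT, hET, hFT⟩ := hsol
  have hsq : ContinuousOn (fun u => (a + B u) ^ 2) (Icc 0 T) :=
    (continuousOn_const.add hB.continuousOn).pow 2
  have hD' : ∀ t ∈ Icc 0 T, HasDerivWithinAt D
      (-F t * D t - γ2 * s / (2 * lam) * (a + B t) ^ 2) (Icc 0 T) t := by
    intro t ht
    rw [hD]
    simpa only [mul_assoc] using hasDerivWithinAt_integral_exp_integral_mul
      (h := fun u => γ2 * s / (2 * lam) * (a + B u) ^ 2) hF.continuousOn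
      (continuousOn_const.mul hsq) ht
  have hA' : ∀ t ∈ Icc 0 T, HasDerivWithinAt A
      (-(C t * D t + γbar * s * a ^ 2 - γ2 * s / 2 * (a + B t) ^ 2)) (Icc 0 T) t := by
    have hDc : ContinuousOn D (Icc 0 T) := fun t ht => (hD' t ht).continuousWithinAt
    intro t ht
    rw [hA]
    exact (((hC.continuousOn.mul hDc).add continuousOn_const).sub
      (continuousOn_const.mul hsq)).hasDerivWithinAt_integral_Icc ht
  subst hf hg
  refine ⟨fun t ht x y => ?_, fun x y => ?_⟩
  · have htT : t ∈ Icc 0 T := Ico_subset_Icc_self ht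
    have hU := uniqueDiffOn_Icc (ht.1.trans_lt ht.2) t htT
    obtain ⟨hBt, hCt, hEt, hFt⟩ := hODE t htT
    simp only [(hA' t htT).derivWithin_affine hBt hCt hU, (hD' t htT).derivWithin_affine hEt hFt hU,
      deriv_add_const', deriv_const_add', deriv_const_mul_id', deriv_const']
    constructor <;> ring
  · simp [hA, hD, hBT, hCT, hET, hFT]

/-- Given a solution `(B, C, E, F)` of the coupled Riccati system and the associated `A`, `D`,
the affine functions `f(t,x,y) = A(t) + B(t)x + C(t)y` and `g(t,x,y) = D(t) + E(t)x + F(t)y`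
solve the semilinear PDE system on `[0, T) × ℝ²` with terminal conditions
`f(T,x,y) = g(T,x,y) = 0`. -/
theorem affine_functions_solve_pde
    (γ1 γ2 lam β a s T : ℝ)
    (hγ1 : 0 < γ1) (hγ2 : 0 < γ2) (hlam : 0 < lam) (hβ : 0 < β) (ha : 0 < a) (hT : 0 < T)
    (B C E F : ℝ → ℝ) (hsol : RiccatiSystem γ1 γ2 lam β a T B C E F)
    (γbar : ℝ) (hγbar : γbar = γ1 * γ2 / (γ1 + γ2))
    (D A : ℝ → ℝ)
    (hD : D = fun t => ∫ u in t..T, Real.exp (∫ r in t..u, F r) * (γ2 * s / (2 * lam)) *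
      (a + B u) ^ 2)
    (hA : A = fun t => ∫ u in t..T,
      (C u * D u + γbar * s * a ^ 2 - γ2 * s / 2 * (a + B u) ^ 2))
    (f g : ℝ → ℝ → ℝ → ℝ)
    (hf : f = fun t x y => A t + B t * x + C t * y)
    (hg : g = fun t x y => D t + E t * x + F t * y) :
    (∀ t ∈ Ico (0:ℝ) T, ∀ x y : ℝ,
      derivWithin (fun τ => f τ x y) (Icc 0 T) t
          + 1 / 2 * deriv (fun x' => deriv (fun x'' => f t x'' y) x') x
          + deriv (fun y' => f t x y') y * g t x y
        = -(γbar * s * a ^ 2) + γ2 * s / 2 * (a + deriv (fun x' => f t x' y) x) ^ 2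
            + (γ1 - γ2) / 2 * β * (a + deriv (fun x' => f t x' y) x) * x
            + (γ1 - γ2) / 2 * (a + deriv (fun x' => f t x' y) x) ^ 2 * y ∧
      derivWithin (fun τ => g τ x y) (Icc 0 T) t
          + 1 / 2 * deriv (fun x' => deriv (fun x'' => g t x'' y) x') x
          + deriv (fun y' => g t x y') y * g t x y
        = (γ1 + γ2) / (2 * lam) * β * (a + deriv (fun x' => f t x' y) x) * x
            - γ2 * s / (2 * lam) * (a + deriv (fun x' => f t x' y) x) ^ 2
            + (γ1 + γ2) / (2 * lam) * (a + deriv (fun x' => f t x' y) x) ^ 2 * y) ∧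
    (∀ x y : ℝ, f T x y = 0 ∧ g T x y = 0) :=
  affine_functions_solve_pde_general γ1 γ2 lam β a s T B C E F hsol γbar D A hD hA f g hf hg
end

section
/- Let γ̂, λ > 0, T > 0, and let B̃, B̃′ : [0, T] → ℝ be continuous bounded functions with associated solutions F^{B̃} and F^{B̃′} of the Riccati ODE F(t) = −∫ₜᵀ ( (γ̂/λ) B̃(s)² − F(s)² ) ds (with B̃ replaced by B̃′ in the second case). Then for all t ∈ [0, T], |F^{B̃}(t) − F^{B̃′}(t)| ≤ (γ̂/λ) ( ‖B̃‖_∞ + ‖B̃′‖_∞ ) ‖B̃ − B̃′‖_∞ (T − t). -/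
/-!
Write `q = (γ̂/λ) B̃²`, so that `F' = q - F²` and `F(T) = 0`. Both comparison steps rest on one
integrating-factor argument: if `y' ≥ c y` on `[a, b]` and `y(b) ≤ 0`, then `exp(∫ₜᵇ c) · y(t)`
is nondecreasing, hence `y ≤ 0`. With `c = -F` it gives `F ≤ 0`. The difference `D = F - F'`
satisfies `D' = (q - q') - (F + F') D` with `-(F + F') ≥ 0`, and with `c = -(F + F')` applied
to `±D - C (T - t)` it gives `|D(t)| ≤ C (T - t)` for `C ≥ sup |q - q'|`; finally
`|q - q'| = (γ̂/λ) |B̃ + B̃'| |B̃ - B̃'|`.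
-/

open Set

/-- The supremum norm of `f` on the interval `[0, T]`. -/
noncomputable def supNorm (T : ℝ) (f : ℝ → ℝ) : ℝ :=
  sSup ((fun t => |f t|) '' Icc 0 T)

theorem hasDerivAt_of_eq_neg_integral {a b : ℝ} {F G : ℝ → ℝ} (hG : ContinuousOn G (Icc a b))
    (hF : ∀ t ∈ Icc a b, F t = -∫ s in t..b, G s) {t : ℝ} (ht : t ∈ Ioo a b) :
    HasDerivAt F (G t) t := by
  have hnhds : Icc a b ∈ nhds t := Icc_mem_nhds ht.1 ht.2
  have hprim : HasDerivAt (fun u => ∫ s in b..u, G s) (G t) t :=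
    intervalIntegral.integral_hasDerivAt_right
      (hG.mono (uIcc_subset_Icc (right_mem_Icc.2 (ht.1.trans ht.2).le)
        (Ioo_subset_Icc_self ht))).intervalIntegrable
      ((hG.mono Ioo_subset_Icc_self).stronglyMeasurableAtFilter isOpen_Ioo t ht)
      (hG.continuousAt hnhds)
  refine hprim.congr_of_eventuallyEq ?_
  filter_upwards [hnhds] with u hu
  rw [hF u hu, intervalIntegral.integral_symm, neg_neg]

theorem nonpos_of_hasDerivAt_ge_mul {a b : ℝ} {y y' c : ℝ → ℝ}
    (hy : ContinuousOn y (Icc a b)) (hc : ContinuousOn c (Icc a b))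
    (hy' : ∀ t ∈ Ioo a b, HasDerivAt y (y' t) t) (hineq : ∀ t ∈ Ioo a b, c t * y t ≤ y' t)
    (hb : y b ≤ 0) : ∀ t ∈ Icc a b, y t ≤ 0 := by
  intro t ht
  have hab : a ≤ b := ht.1.trans ht.2
  set I : ℝ → ℝ := fun u => -∫ s in u..b, c s
  have hIcont : ContinuousOn I (Icc a b) := by
    have := intervalIntegral.continuousOn_primitive_interval_left (μ := MeasureTheory.volume)
      (hc.mono (uIcc_of_le hab).subset).integrableOn_Icc
    rw [uIcc_of_le hab] at this
    exact this.neg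
  have hI' : ∀ u ∈ Ioo a b, HasDerivAt I (c u) u :=
    fun u hu => hasDerivAt_of_eq_neg_integral hc (fun _ _ => rfl) hu
  have hmono : MonotoneOn (fun u => Real.exp (-I u) * y u) (Icc a b) := by
    refine monotoneOn_of_hasDerivWithinAt_nonneg (convex_Icc a b)
      ((hIcont.neg.rexp).mul hy) (fun u hu => ?_) (fun u hu => ?_)
      (f' := fun u => Real.exp (-I u) * (y' u - c u * y u))
    · rw [interior_Icc] at hu
      refine (((hI' u hu).neg.exp.mul (hy' u hu)).congr_deriv ?_).hasDerivWithinAt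
      simp only [Pi.neg_apply]
      ring
    · rw [interior_Icc] at hu
      exact mul_nonneg (Real.exp_pos _).le (sub_nonneg.2 (hineq u hu))
  have hψb : Real.exp (-I b) * y b ≤ 0 := mul_nonpos_of_nonneg_of_nonpos (Real.exp_pos _).le hb
  exact nonpos_of_mul_nonpos_right ((hmono ht (right_mem_Icc.2 hab) ht.2).trans hψb)
    (Real.exp_pos _)

section Riccati

variable {a b : ℝ} {q q' F F' : ℝ → ℝ}

theorem riccati_hasDerivAt (hq : ContinuousOn q (Icc a b)) (hF : ContinuousOn F (Icc a b))
    (hsol : ∀ t ∈ Icc a b, F t = -∫ s in t..b, (q s - F s ^ 2)) {t : ℝ} (ht : t ∈ Ioo a b) :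
    HasDerivAt F (q t - F t ^ 2) t :=
  hasDerivAt_of_eq_neg_integral (hq.sub (hF.pow 2)) hsol ht

theorem riccati_eq_zero_right (hsol : ∀ t ∈ Icc a b, F t = -∫ s in t..b, (q s - F s ^ 2))
    (hab : a ≤ b) : F b = 0 := by
  simpa using hsol b (right_mem_Icc.2 hab)

theorem riccati_nonpos (hq0 : ∀ t ∈ Icc a b, 0 ≤ q t) (hq : ContinuousOn q (Icc a b))
    (hF : ContinuousOn F (Icc a b))
    (hsol : ∀ t ∈ Icc a b, F t = -∫ s in t..b, (q s - F s ^ 2)) :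
    ∀ t ∈ Icc a b, F t ≤ 0 := fun t ht =>
  nonpos_of_hasDerivAt_ge_mul (c := fun s => -F s) hF hF.neg (fun _ hs => riccati_hasDerivAt hq hF hsol hs)
    (fun s hs => by nlinarith [hq0 s (Ioo_subset_Icc_self hs)])
    (riccati_eq_zero_right hsol (ht.1.trans ht.2)).le t ht

theorem riccati_sub_le {C : ℝ} (hC : 0 ≤ C)
    (hq0 : ∀ t ∈ Icc a b, 0 ≤ q t) (hq'0 : ∀ t ∈ Icc a b, 0 ≤ q' t)
    (hq : ContinuousOn q (Icc a b)) (hq' : ContinuousOn q' (Icc a b))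
    (hF : ContinuousOn F (Icc a b)) (hF' : ContinuousOn F' (Icc a b))
    (hsol : ∀ t ∈ Icc a b, F t = -∫ s in t..b, (q s - F s ^ 2))
    (hsol' : ∀ t ∈ Icc a b, F' t = -∫ s in t..b, (q' s - F' s ^ 2))
    (hqC : ∀ s ∈ Icc a b, q' s - q s ≤ C) :
    ∀ t ∈ Icc a b, F t - F' t ≤ C * (b - t) := by
  intro t ht
  have hab : a ≤ b := ht.1.trans ht.2
  have hFF'_nonpos : ∀ s ∈ Icc a b, F s + F' s ≤ 0 := fun s hs =>
    add_nonpos (riccati_nonpos hq0 hq hF hsol s hs) (riccati_nonpos hq'0 hq' hF' hsol' s hs)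
  have hbarrier := nonpos_of_hasDerivAt_ge_mul (y := fun s => F s - F' s - C * (b - s))
    (y' := fun s => (q s - F s ^ 2) - (q' s - F' s ^ 2) + C) (c := fun s => -(F s + F' s))
    ((hF.sub hF').sub (continuousOn_const.mul (continuousOn_const.sub continuousOn_id)))
    (hF.add hF').neg
    (fun s hs => (((riccati_hasDerivAt hq hF hsol hs).sub
      (riccati_hasDerivAt hq' hF' hsol' hs)).sub
      (((hasDerivAt_id s).const_sub b).const_mul C)).congr_deriv (by ring))
    (fun s hs => by
      have hs' := Ioo_subset_Icc_self hs
      nlinarith [hqC s hs', mul_nonneg (neg_nonneg.2 (hFF'_nonpos s hs'))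
        (mul_nonneg hC (sub_nonneg.2 hs.2.le))])
    (by simp [riccati_eq_zero_right hsol hab, riccati_eq_zero_right hsol' hab]) t ht
  linarith

theorem riccati_abs_sub_le {C : ℝ}
    (hq0 : ∀ t ∈ Icc a b, 0 ≤ q t) (hq'0 : ∀ t ∈ Icc a b, 0 ≤ q' t)
    (hq : ContinuousOn q (Icc a b)) (hq' : ContinuousOn q' (Icc a b))
    (hF : ContinuousOn F (Icc a b)) (hF' : ContinuousOn F' (Icc a b))
    (hsol : ∀ t ∈ Icc a b, F t = -∫ s in t..b, (q s - F s ^ 2))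
    (hsol' : ∀ t ∈ Icc a b, F' t = -∫ s in t..b, (q' s - F' s ^ 2))
    (hqC : ∀ s ∈ Icc a b, |q s - q' s| ≤ C) :
    ∀ t ∈ Icc a b, |F t - F' t| ≤ C * (b - t) := by
  intro t ht
  have hC : 0 ≤ C := (abs_nonneg _).trans (hqC t ht)
  rw [abs_sub_le_iff]
  exact ⟨riccati_sub_le hC hq0 hq'0 hq hq' hF hF' hsol hsol'
      (fun s hs => (abs_sub_le_iff.1 (hqC s hs)).2) t ht,
    riccati_sub_le hC hq'0 hq0 hq' hq hF' hF hsol' hsol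
      (fun s hs => (abs_sub_le_iff.1 (hqC s hs)).1) t ht⟩

end Riccati

theorem abs_le_supNorm {T t : ℝ} {f : ℝ → ℝ} (hf : ContinuousOn f (Icc 0 T)) (ht : t ∈ Icc 0 T) :
    |f t| ≤ supNorm T f :=
  le_csSup (isCompact_Icc.image_of_continuousOn hf.abs).bddAbove ⟨t, ht, rfl⟩

theorem abs_mul_sq_sub_mul_sq_le_supNorm {T k s : ℝ} {B B' : ℝ → ℝ} (hk : 0 ≤ k)
    (hB : ContinuousOn B (Icc 0 T)) (hB' : ContinuousOn B' (Icc 0 T)) (hs : s ∈ Icc 0 T) :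
    |k * B s ^ 2 - k * B' s ^ 2| ≤
      k * (supNorm T B + supNorm T B') * supNorm T (fun u => B u - B' u) := by
  have hsum : |B s + B' s| ≤ supNorm T B + supNorm T B' :=
    (abs_add_le _ _).trans (add_le_add (abs_le_supNorm hB hs) (abs_le_supNorm hB' hs))
  have hdiff : |B s - B' s| ≤ supNorm T (fun u => B u - B' u) :=
    abs_le_supNorm (f := fun u => B u - B' u) (hB.sub hB') hs
  calc |k * B s ^ 2 - k * B' s ^ 2| = k * (|B s + B' s| * |B s - B' s|) := by
        rw [← mul_sub, sq_sub_sq, abs_mul, abs_mul, abs_of_nonneg hk]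
    _ ≤ k * ((supNorm T B + supNorm T B') * supNorm T (fun u => B u - B' u)) :=
        mul_le_mul_of_nonneg_left
          (mul_le_mul hsum hdiff (abs_nonneg _) ((abs_nonneg _).trans hsum)) hk
    _ = k * (supNorm T B + supNorm T B') * supNorm T (fun u => B u - B' u) := by ring

theorem riccati_F_stability_general
    (γhat lam T : ℝ) (hγ : 0 < γhat) (hlam : 0 < lam)
    (Btil Btil' : ℝ → ℝ)
    (hB : ContinuousOn Btil (Icc 0 T)) (hB' : ContinuousOn Btil' (Icc 0 T))
    (F F' : ℝ → ℝ)
    (hFcont : ContinuousOn F (Icc 0 T)) (hF'cont : ContinuousOn F' (Icc 0 T))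
    (hFsol : ∀ t ∈ Icc (0:ℝ) T, F t = -∫ s in t..T, (γhat / lam * Btil s ^ 2 - F s ^ 2))
    (hF'sol : ∀ t ∈ Icc (0:ℝ) T, F' t = -∫ s in t..T, (γhat / lam * Btil' s ^ 2 - F' s ^ 2)) :
    ∀ t ∈ Icc (0:ℝ) T,
      |F t - F' t| ≤ γhat / lam * (supNorm T Btil + supNorm T Btil') *
        supNorm T (fun u => Btil u - Btil' u) * (T - t) := by
  have hk : 0 ≤ γhat / lam := div_nonneg hγ.le hlam.le
  exact riccati_abs_sub_le (q := fun s => γhat / lam * Btil s ^ 2)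
    (q' := fun s => γhat / lam * Btil' s ^ 2)
    (fun s _ => mul_nonneg hk (sq_nonneg _)) (fun s _ => mul_nonneg hk (sq_nonneg _))
    (continuousOn_const.mul (hB.pow 2)) (continuousOn_const.mul (hB'.pow 2))
    hFcont hF'cont hFsol hF'sol (fun _ hs => abs_mul_sq_sub_mul_sq_le_supNorm hk hB hB' hs)

/-- Stability of the Riccati solution `F^{B̃}` with respect to `B̃`:
`|F^{B̃}(t) − F^{B̃′}(t)| ≤ (γ̂/λ)(‖B̃‖_∞ + ‖B̃′‖_∞)‖B̃ − B̃′‖_∞(T − t)` on `[0, T]`. -/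
theorem riccati_F_stability
    (γhat lam T : ℝ) (hγ : 0 < γhat) (hlam : 0 < lam) (hT : 0 < T)
    (Btil Btil' : ℝ → ℝ)
    (hB : ContinuousOn Btil (Icc 0 T)) (hB' : ContinuousOn Btil' (Icc 0 T))
    (F F' : ℝ → ℝ)
    (hFcont : ContinuousOn F (Icc 0 T)) (hF'cont : ContinuousOn F' (Icc 0 T))
    (hFsol : ∀ t ∈ Icc (0:ℝ) T, F t = -∫ s in t..T, (γhat / lam * Btil s ^ 2 - F s ^ 2))
    (hF'sol : ∀ t ∈ Icc (0:ℝ) T, F' t = -∫ s in t..T, (γhat / lam * Btil' s ^ 2 - F' s ^ 2)) :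
    ∀ t ∈ Icc (0:ℝ) T,
      |F t - F' t| ≤ γhat / lam * (supNorm T Btil + supNorm T Btil') *
        supNorm T (fun u => Btil u - Btil' u) * (T - t) :=
  riccati_F_stability_general γhat lam T hγ hlam Btil Btil' hB hB' F F' hFcont hF'cont hFsol hF'sol
end
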